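/- For p, q > 1 satisfying conditions 2 + 1/p + 1/p² ≤ 5/p + 1/q < 3 + 1/p² and ε(p,q) > 0, and for all r, s ∈ (0,1): (1−1/p)π_{p,q}/(2(1+1/q−1/p)) − 1 < Δ_{p,q}(rs) − Δ_{p,q}(r) − Δ_{p,q}(s) < 1 − (1−1/p)π_{p,q}/(2(1+1/q−1/p)). -/

import Mathlib

open Real Set Filter Topology

/-- Gaussian hypergeometric function `F(a,b;c;z)` as a power series. -/
noncomputable def hypF (a b c z : ℝ) : ℝ :=
  ∑' n : ℕ, ((ascPochhammer ℝ n).eval a * (ascPochhammer ℝ n).eval b /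
    ((ascPochhammer ℝ n).eval c * (n.factorial : ℝ))) * z ^ n

/-- Generalized π: `π_{p,q} = (2/q) B(1-1/p, 1/q)` with `B(x,y) = Γ(x)Γ(y)/Γ(x+y)`. -/
noncomputable def piGen (p q : ℝ) : ℝ :=
  (2 / q) * (Real.Gamma (1 - 1/p) * Real.Gamma (1/q) / Real.Gamma (1 - 1/p + 1/q))

/-- Generalized complete (p,q)-elliptic integral of the first kind. -/
noncomputable def Kgen (p q r : ℝ) : ℝ :=
  (piGen p q / 2) * hypF (1/q) (1 - 1/p) (1 - 1/p + 1/q) (r ^ p)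

/-- Generalized complete (p,q)-elliptic integral of the second kind. -/
noncomputable def Egen (p q r : ℝ) : ℝ :=
  (piGen p q / 2) * hypF (1/q) (-(1/p)) (1 - 1/p + 1/q) (r ^ p)

/-- The function `Δ_{p,q}` with `r' = (1-r^p)^{1/p}`. -/
noncomputable def DeltaGen (p q r : ℝ) : ℝ :=
  (Egen p q r - ((1 - r ^ p) ^ (1/p)) ^ p * Kgen p q r) / r ^ p -
  (Egen p q ((1 - r ^ p) ^ (1/p)) - r ^ p * Kgen p q ((1 - r ^ p) ^ (1/p))) /
    ((1 - r ^ p) ^ (1/p)) ^ p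

/-!
Write `α = 1/q`, `β = 1 - 1/p` and `z = r^p`, so that `K_{p,q}` and `E_{p,q}` are `π_{p,q}/2` times
the zero-balanced series `F(α, β; α + β; z)` and `F(α, β - 1; α + β; z)`. If `b_n` are the
coefficients of the first series, comparing coefficients gives
`E - (1 - z) K = (π_{p,q}/2) z ∑ δ_n z^n` with `δ_n = β b_n / (α + β + n) > 0`, hence
`Δ_{p,q}(r) = (π_{p,q}/2) ∑ δ_n (z^n - (1 - z)^n)`. Since `α δ_n = (n + 1) b_{n+1} - n b_n`
telescopes and `n b_n → Γ(α + β) / (Γ(α) Γ(β))`, we get `(π_{p,q}/2) ∑ δ_n = 1`.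
For `a, b ∈ [0, 1]` the `n`-th coefficient of `Δ(rs) - Δ(r) - Δ(s)` lies in `[-1, 1]`, vanishes
for `n = 0` and lies strictly inside for `n = 1`, so
`|Δ(rs) - Δ(r) - Δ(s)| < (π_{p,q}/2) (∑ δ_n - δ_0) = 1 - (π_{p,q}/2) δ_0`.
-/

theorem ascPochhammer_eval_eq_prod_range {S : Type*} [CommSemiring S] (s : S) (n : ℕ) :
    (ascPochhammer S n).eval s = ∏ j ∈ Finset.range n, (s + j) := by
  induction n with
  | zero => simp
  | succ n ih => rw [ascPochhammer_succ_eval, ih, Finset.prod_range_succ]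

theorem Real.GammaSeq_eq_div_ascPochhammer (s : ℝ) (n : ℕ) :
    GammaSeq s n = (n : ℝ) ^ s * n.factorial / (ascPochhammer ℝ (n + 1)).eval s := by
  rw [GammaSeq, ascPochhammer_eval_eq_prod_range]

theorem summable_mul_of_abs_le_one {c X : ℕ → ℝ} (hc : Summable c) (hc0 : ∀ n, 0 ≤ c n)
    (hX : ∀ n, |X n| ≤ 1) : Summable (fun n => c n * X n) :=
  hc.of_norm_bounded fun n => by
    rw [Real.norm_eq_abs, abs_mul, abs_of_nonneg (hc0 n)]
    exact mul_le_of_le_one_right (hc0 n) (hX n)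

noncomputable def hypCoeff (a b c : ℝ) (n : ℕ) : ℝ :=
  (ascPochhammer ℝ n).eval a * (ascPochhammer ℝ n).eval b /
    ((ascPochhammer ℝ n).eval c * (n.factorial : ℝ))

theorem hypF_eq_tsum (a b c z : ℝ) : hypF a b c z = ∑' n, hypCoeff a b c n * z ^ n := rfl

@[simp]
theorem hypCoeff_zero (a b c : ℝ) : hypCoeff a b c 0 = 1 := by simp [hypCoeff]

theorem hypCoeff_succ {a b c : ℝ} (hc : 0 < c) (n : ℕ) :
    hypCoeff a b c (n + 1) = hypCoeff a b c n * ((a + n) * (b + n)) / ((c + n) * (n + 1)) := by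
  have := (ascPochhammer_pos n c hc).ne'
  simp only [hypCoeff, ascPochhammer_succ_eval, Nat.factorial_succ, Nat.cast_mul, Nat.cast_succ]
  field_simp

theorem hypCoeff_pos {a b c : ℝ} (ha : 0 < a) (hb : 0 < b) (hc : 0 < c) (n : ℕ) :
    0 < hypCoeff a b c n := by
  have := ascPochhammer_pos n a ha
  have := ascPochhammer_pos n b hb
  have := ascPochhammer_pos n c hc
  unfold hypCoeff
  positivity

section ZeroBalanced

variable {α β : ℝ}

theorem hypCoeff_add_le_one (hα : 0 < α) (hβ : 0 < β) (hβ1 : β ≤ 1) (n : ℕ) :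
    hypCoeff α β (α + β) n ≤ 1 := by
  induction n with
  | zero => simp
  | succ n ih =>
    have hpos := hypCoeff_pos hα hβ (add_pos hα hβ) n
    rw [hypCoeff_succ (add_pos hα hβ), div_le_one (by positivity)]
    have hratio : (α + n) * (β + n) ≤ (α + β + n) * (n + 1) := by
      nlinarith [mul_le_mul_of_nonneg_left hβ1 hα.le]
    calc hypCoeff α β (α + β) n * ((α + n) * (β + n)) ≤ 1 * ((α + β + n) * (n + 1)) := by gcongr
      _ = _ := one_mul _

noncomputable def deltaCoeff (α β : ℝ) (n : ℕ) : ℝ := β * hypCoeff α β (α + β) n / (α + β + n)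

theorem deltaCoeff_pos (hα : 0 < α) (hβ : 0 < β) (n : ℕ) : 0 < deltaCoeff α β n := by
  have := hypCoeff_pos hα hβ (add_pos hα hβ) n
  unfold deltaCoeff
  positivity

theorem mul_deltaCoeff (hαβ : 0 < α + β) (n : ℕ) :
    α * deltaCoeff α β n =
      (n + 1) * hypCoeff α β (α + β) (n + 1) - n * hypCoeff α β (α + β) n := by
  have : α + β + n ≠ 0 := by positivity
  rw [deltaCoeff, hypCoeff_succ hαβ]
  field_simp
  ring

theorem hypCoeff_sub_one_succ (hαβ : 0 < α + β) (n : ℕ) :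
    hypCoeff α (β - 1) (α + β) (n + 1) =
      deltaCoeff α β n + hypCoeff α β (α + β) (n + 1) - hypCoeff α β (α + β) n := by
  have hshift :
      (ascPochhammer ℝ (n + 1)).eval (β - 1) = (β - 1) * (ascPochhammer ℝ n).eval β := by
    simp [ascPochhammer_succ_left, Polynomial.eval_comp]
  have := (ascPochhammer_pos n _ hαβ).ne'
  have : α + β + n ≠ 0 := by positivity
  simp only [deltaCoeff, hypCoeff, hshift, ascPochhammer_succ_eval, Nat.factorial_succ,
    Nat.cast_mul, Nat.cast_succ]
  field_simp
  ring

theorem succ_mul_hypCoeff_succ (hα : 0 < α) (hβ : 0 < β) {n : ℕ} (hn : n ≠ 0) :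
    (n + 1) * hypCoeff α β (α + β) (n + 1) =
      GammaSeq (α + β) n / (GammaSeq α n * GammaSeq β n) := by
  have hn' : (0 : ℝ) < n := by positivity
  have := ascPochhammer_pos (n + 1) α hα
  have := ascPochhammer_pos (n + 1) β hβ
  have := ascPochhammer_pos n _ (add_pos hα hβ)
  rw [GammaSeq_eq_div_ascPochhammer, GammaSeq_eq_div_ascPochhammer,
    GammaSeq_eq_div_ascPochhammer, rpow_add hn', hypCoeff]
  simp only [ascPochhammer_succ_eval (n := n) (k := α + β), Nat.factorial_succ, Nat.cast_mul,
    Nat.cast_succ]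
  have := rpow_pos_of_pos hn' α
  have := rpow_pos_of_pos hn' β
  field_simp

theorem tendsto_natCast_mul_hypCoeff (hα : 0 < α) (hβ : 0 < β) :
    Tendsto (fun n : ℕ => n * hypCoeff α β (α + β) n) atTop
      (𝓝 (Gamma (α + β) / (Gamma α * Gamma β))) := by
  rw [← tendsto_add_atTop_iff_nat 1]
  refine ((GammaSeq_tendsto_Gamma _).div ((GammaSeq_tendsto_Gamma α).mul
    (GammaSeq_tendsto_Gamma β))
    (mul_pos (Gamma_pos_of_pos hα) (Gamma_pos_of_pos hβ)).ne').congr' ?_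
  filter_upwards [eventually_ne_atTop 0] with n hn
  push_cast
  exact (succ_mul_hypCoeff_succ hα hβ hn).symm

theorem hasSum_deltaCoeff (hα : 0 < α) (hβ : 0 < β) :
    HasSum (deltaCoeff α β) (Gamma (α + β) / (Gamma α * Gamma β) / α) := by
  rw [hasSum_iff_tendsto_nat_of_nonneg fun n => (deltaCoeff_pos hα hβ n).le]
  have htel : ∀ n : ℕ, deltaCoeff α β n =
      (((n + 1 : ℕ) : ℝ) * hypCoeff α β (α + β) (n + 1) - n * hypCoeff α β (α + β) n) / α := by
    intro n
    rw [eq_div_iff hα.ne', mul_comm, mul_deltaCoeff (add_pos hα hβ)]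
    push_cast
    rfl
  simp_rw [htel, ← Finset.sum_div,
    Finset.sum_range_sub (fun n : ℕ => n * hypCoeff α β (α + β) n)]
  simpa using (tendsto_natCast_mul_hypCoeff hα hβ).div_const α

theorem summable_deltaCoeff_mul_pow {z : ℝ} (hα : 0 < α) (hβ : 0 < β) (hz0 : 0 ≤ z)
    (hz1 : z ≤ 1) : Summable (fun n => deltaCoeff α β n * z ^ n) :=
  summable_mul_of_abs_le_one (hasSum_deltaCoeff hα hβ).summable
    (fun n => (deltaCoeff_pos hα hβ n).le)
    (fun n => by rw [abs_of_nonneg (by positivity)]; exact pow_le_one₀ hz0 hz1)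

theorem hypF_sub_one_eq {z : ℝ} (hα : 0 < α) (hβ : 0 < β) (hβ1 : β ≤ 1) (hz0 : 0 ≤ z)
    (hz1 : z < 1) :
    hypF α (β - 1) (α + β) z =
      (1 - z) * hypF α β (α + β) z + z * ∑' n, deltaCoeff α β n * z ^ n := by
  have hK : HasSum (fun n => hypCoeff α β (α + β) n * z ^ n) (hypF α β (α + β) z) := by
    refine (Summable.of_nonneg_of_le (fun n => ?_) (fun n => ?_)
      (summable_geometric_of_lt_one hz0 hz1)).hasSum
    · have := hypCoeff_pos hα hβ (add_pos hα hβ) n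
      positivity
    · exact mul_le_of_le_one_left (by positivity) (hypCoeff_add_le_one hα hβ hβ1 n)
  have hδ := summable_deltaCoeff_mul_pow hα hβ hz0 hz1.le
  have hK' := (hasSum_nat_add_iff' 1).mpr hK
  have hE : HasSum (fun n => hypCoeff α (β - 1) (α + β) (n + 1) * z ^ (n + 1))
      (z * ∑' n, deltaCoeff α β n * z ^ n +
        (hypF α β (α + β) z - 1 - z * hypF α β (α + β) z)) := by
    have h := (hδ.hasSum.mul_left z).add (hK'.sub (hK.mul_left z))
    simp only [Finset.sum_range_one, pow_zero, hypCoeff_zero, mul_one] at h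
    refine h.congr_fun fun n => ?_
    rw [hypCoeff_sub_one_succ (add_pos hα hβ)]
    ring
  have hEs : Summable (fun n => hypCoeff α (β - 1) (α + β) n * z ^ n) :=
    (summable_nat_add_iff 1).mp hE.summable
  rw [hypF_eq_tsum, hEs.tsum_eq_zero_add, hE.tsum_eq, hypCoeff_zero, pow_zero]
  ring

end ZeroBalanced

def powDiff (z : ℝ) (n : ℕ) : ℝ := z ^ n - (1 - z) ^ n

theorem abs_powDiff_le {z : ℝ} (hz0 : 0 ≤ z) (hz1 : z ≤ 1) (n : ℕ) : |powDiff z n| ≤ 1 := by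
  have := pow_le_one₀ hz0 hz1 (n := n)
  have := pow_le_one₀ (sub_nonneg.2 hz1) (sub_le_self 1 hz0) (n := n)
  rw [powDiff, abs_le]
  constructor <;> linarith [pow_nonneg hz0 n, pow_nonneg (sub_nonneg.2 hz1) n]

theorem abs_tsum_mul_lt_tsum_sub {c X : ℕ → ℝ} (hc : Summable c) (hc0 : ∀ n, 0 ≤ c n)
    (hX : ∀ n, |X n| ≤ 1) (hX0 : X 0 = 0) (hc1 : 0 < c 1) (hX1 : |X 1| < 1) :
    |∑' n, c n * X n| < ∑' n, c n - c 0 := by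
  have hcX := summable_mul_of_abs_le_one hc hc0 hX
  rw [hcX.tsum_eq_zero_add, hc.tsum_eq_zero_add, hX0, mul_zero, zero_add, add_sub_cancel_left]
  have hs : Summable (fun n => c (n + 1)) := (summable_nat_add_iff 1).mpr hc
  have hs' : Summable (fun n => c (n + 1) * X (n + 1)) := (summable_nat_add_iff 1).mpr hcX
  rw [abs_lt] at hX1 ⊢
  constructor
  · rw [← tsum_neg]
    refine hs.neg.tsum_lt_tsum (i := 0) (fun n => ?_) (by nlinarith) hs'
    nlinarith [hc0 (n + 1), abs_le.1 (hX (n + 1))]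
  · refine hs'.tsum_lt_tsum (i := 0) (fun n => ?_) (by nlinarith) hs
    nlinarith [hc0 (n + 1), abs_le.1 (hX (n + 1))]

-- `t ↦ (x + t) ^ n - x ^ n - t ^ n` is convex and vanishes at `0`.
theorem add_mul_pow_sub_le {x a w : ℝ} (hx : 0 ≤ x) (ha : 0 ≤ a) (hw0 : 0 ≤ w) (hw1 : w ≤ 1)
    {n : ℕ} (hn : 1 ≤ n) :
    (x + a * w) ^ n - x ^ n - (a * w) ^ n ≤ w * ((x + a) ^ n - x ^ n - a ^ n) := by
  induction n, hn using Nat.le_induction with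
  | base => ring_nf; rfl
  | succ n hn ih =>
    have hψ : 0 ≤ (x + a) ^ n - x ^ n - a ^ n := by
      linarith [pow_add_pow_le hx ha (n := n) (by omega)]
    have hy : a * w ≤ a := mul_le_of_le_one_right ha hw1
    have hwn : w ^ n ≤ w := pow_le_of_le_one hw0 hw1 (by omega)
    have hxn := pow_nonneg hx n
    have han := pow_nonneg ha n
    calc (x + a * w) ^ (n + 1) - x ^ (n + 1) - (a * w) ^ (n + 1)
        = (x + a * w) * ((x + a * w) ^ n - x ^ n - (a * w) ^ n) + x ^ n * (a * w)
            + a ^ n * w ^ n * x := by ring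
      _ ≤ (x + a) * (w * ((x + a) ^ n - x ^ n - a ^ n)) + x ^ n * (a * w) + a ^ n * w * x := by
          gcongr ?_ + _ + a ^ n * ?_ * x
          calc (x + a * w) * ((x + a * w) ^ n - x ^ n - (a * w) ^ n)
              ≤ (x + a * w) * (w * ((x + a) ^ n - x ^ n - a ^ n)) := by gcongr
            _ ≤ (x + a) * (w * ((x + a) ^ n - x ^ n - a ^ n)) := by gcongr
      _ = w * ((x + a) ^ (n + 1) - x ^ (n + 1) - a ^ (n + 1)) := by ring

section UnitSquare

variable {a b : ℝ} (ha0 : 0 ≤ a) (ha1 : a ≤ 1) (hb0 : 0 ≤ b) (hb1 : b ≤ 1)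
include ha0 ha1 hb0 hb1

theorem pow_add_pow_add_one_sub_mul_pow_le (n : ℕ) :
    a ^ n + b ^ n + (1 - a * b) ^ n ≤ 1 + (1 - a) ^ n + (1 - b) ^ n + (a * b) ^ n := by
  rcases Nat.eq_zero_or_pos n with rfl | hn
  · norm_num
  have key := add_mul_pow_sub_le (sub_nonneg.2 ha1) ha0 (sub_nonneg.2 hb1) (sub_le_self 1 hb0) hn
  rw [show 1 - a + a * (1 - b) = 1 - a * b by ring, sub_add_cancel, one_pow, mul_pow] at key
  have hbn : b ^ n ≤ b := pow_le_of_le_one hb0 hb1 hn.ne'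
  have hmid : 0 ≤ 1 - (1 - a) ^ n - a ^ n := by
    have := pow_add_pow_le (sub_nonneg.2 ha1) ha0 hn.ne'
    rw [sub_add_cancel, one_pow] at this
    linarith
  nlinarith [mul_nonneg (sub_nonneg.2 hbn) hmid,
    mul_nonneg (sub_nonneg.2 (pow_le_one₀ ha0 ha1 (n := n))) (pow_nonneg (sub_nonneg.2 hb1) n),
    mul_nonneg (sub_nonneg.2 (pow_le_one₀ hb0 hb1 (n := n))) (pow_nonneg (sub_nonneg.2 ha1) n),
    mul_pow a b n]

theorem mul_pow_add_one_sub_pow_add_le (n : ℕ) :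
    (a * b) ^ n + (1 - a) ^ n + (1 - b) ^ n ≤ 1 + (1 - a * b) ^ n + a ^ n + b ^ n := by
  have h1 : (a * b) ^ n ≤ a ^ n := pow_le_pow_left₀ (by positivity) (by nlinarith) n
  have h2 : (1 - a) ^ n ≤ (1 - a * b) ^ n := pow_le_pow_left₀ (by linarith) (by nlinarith) n
  have h3 : (1 - b) ^ n ≤ 1 := pow_le_one₀ (by linarith) (by linarith)
  linarith [pow_nonneg hb0 n]

theorem abs_powDiff_mul_sub_le (n : ℕ) :
    |powDiff (a * b) n - powDiff a n - powDiff b n| ≤ 1 := by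
  rw [powDiff, powDiff, powDiff, abs_le]
  constructor
  · linarith [pow_add_pow_add_one_sub_mul_pow_le ha0 ha1 hb0 hb1 n]
  · linarith [mul_pow_add_one_sub_pow_add_le ha0 ha1 hb0 hb1 n]

end UnitSquare

theorem abs_powDiff_mul_sub_one_lt {a b : ℝ} (ha : a ∈ Ioo 0 1) (hb : b ∈ Ioo 0 1) :
    |powDiff (a * b) 1 - powDiff a 1 - powDiff b 1| < 1 := by
  obtain ⟨ha0, ha1⟩ := ha
  obtain ⟨hb0, hb1⟩ := hb
  have := mul_pos (sub_pos.2 ha1) (sub_pos.2 hb1)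
  simp only [powDiff, pow_one]
  rw [abs_lt]
  constructor <;> nlinarith

theorem one_sub_one_div_pos {p : ℝ} (hp : 1 < p) : 0 < 1 - 1 / p :=
  sub_pos.2 ((div_lt_one (by linarith)).2 hp)

section Exponents

variable {p q : ℝ}

theorem piGen_pos (hp : 1 < p) (hq : 0 < q) : 0 < piGen p q := by
  have := Gamma_pos_of_pos (one_sub_one_div_pos hp)
  have := Gamma_pos_of_pos (show 0 < 1 / q by positivity)
  have := Gamma_pos_of_pos (add_pos (one_sub_one_div_pos hp) (show 0 < 1 / q by positivity))
  unfold piGen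
  positivity

theorem deltaGen_eq (hp : 1 < p) (hq : 0 < q) {t : ℝ} (ht : t ∈ Ioo 0 1) :
    DeltaGen p q t =
      piGen p q / 2 * ∑' n, deltaCoeff (1 / q) (1 - 1 / p) n * powDiff (t ^ p) n := by
  obtain ⟨ht0, ht1⟩ := ht
  have hα : 0 < 1 / q := by positivity
  have hβ : 0 < 1 - 1 / p := one_sub_one_div_pos hp
  have hβ1 : 1 - 1 / p ≤ 1 := sub_le_self 1 (by positivity)
  rw [DeltaGen]
  set z := t ^ p
  have hz0 : 0 < z := rpow_pos_of_pos ht0 p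
  have hz1 : z < 1 := rpow_lt_one ht0.le ht1 (by linarith)
  have hr' : ((1 - z) ^ (1 / p)) ^ p = 1 - z := by
    rw [← rpow_mul (by linarith), one_div_mul_cancel (by linarith), rpow_one]
  have hK : ∀ w, Kgen p q w =
      piGen p q / 2 * hypF (1 / q) (1 - 1 / p) (1 / q + (1 - 1 / p)) (w ^ p) := by
    intro w; rw [Kgen]; congr 2; ring
  have hE : ∀ w, Egen p q w =
      piGen p q / 2 * hypF (1 / q) (1 - 1 / p - 1) (1 / q + (1 - 1 / p)) (w ^ p) := by
    intro w; rw [Egen]; congr 2 <;> ring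
  simp only [powDiff, mul_sub]
  rw [(summable_deltaCoeff_mul_pow hα hβ hz0.le hz1.le).tsum_sub
      (summable_deltaCoeff_mul_pow hα hβ (by linarith) (by linarith)),
    hE, hE, hK, hK, hr', hypF_sub_one_eq hα hβ hβ1 hz0.le hz1,
    hypF_sub_one_eq hα hβ hβ1 (by linarith) (by linarith)]
  have : 1 - z ≠ 0 := by linarith
  field_simp
  ring

theorem deltaGen_mul_sub (hp : 1 < p) (hq : 0 < q) {r s : ℝ} (hr : r ∈ Ioo 0 1)
    (hs : s ∈ Ioo 0 1) :
    DeltaGen p q (r * s) - DeltaGen p q r - DeltaGen p q s = piGen p q / 2 *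
      ∑' n, deltaCoeff (1 / q) (1 - 1 / p) n *
        (powDiff (r ^ p * s ^ p) n - powDiff (r ^ p) n - powDiff (s ^ p) n) := by
  have hα : 0 < 1 / q := by positivity
  have hβ : 0 < 1 - 1 / p := one_sub_one_div_pos hp
  have hrs : r * s ∈ Ioo 0 1 :=
    ⟨mul_pos hr.1 hs.1, mul_lt_one_of_nonneg_of_lt_one_left hr.1.le hr.2 hs.2.le⟩
  have hδ : ∀ w ∈ Ioo (0 : ℝ) 1,
      Summable (fun n => deltaCoeff (1 / q) (1 - 1 / p) n * powDiff (w ^ p) n) :=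
    fun w hw => summable_mul_of_abs_le_one (hasSum_deltaCoeff hα hβ).summable
      (fun n => (deltaCoeff_pos hα hβ n).le)
      (abs_powDiff_le (rpow_nonneg hw.1.le p) (rpow_le_one hw.1.le hw.2.le (by linarith)))
  simp only [mul_sub]
  rw [deltaGen_eq hp hq hr, deltaGen_eq hp hq hs, deltaGen_eq hp hq hrs,
    ← mul_rpow hr.1.le hs.1.le,
    ((hδ _ hrs).sub (hδ r hr)).tsum_sub (hδ s hs), (hδ _ hrs).tsum_sub (hδ r hr)]
  ring

theorem piGen_div_two_mul_tsum_deltaCoeff (hp : 1 < p) (hq : 0 < q) :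
    piGen p q / 2 * ∑' n, deltaCoeff (1 / q) (1 - 1 / p) n = 1 := by
  have hα : 0 < 1 / q := by positivity
  have hβ := one_sub_one_div_pos hp
  have hΓα := Gamma_pos_of_pos hα
  have hΓβ := Gamma_pos_of_pos hβ
  have hΓαβ := Gamma_pos_of_pos (add_pos hα hβ)
  rw [(hasSum_deltaCoeff hα hβ).tsum_eq, piGen,
    show 1 - 1 / p + 1 / q = 1 / q + (1 - 1 / p) by ring]
  generalize Gamma (1 / q) = A at *
  generalize Gamma (1 - 1 / p) = B at *
  generalize Gamma (1 / q + (1 - 1 / p)) = C at *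
  field_simp

theorem piGen_div_two_mul_deltaCoeff_zero :
    piGen p q / 2 * deltaCoeff (1 / q) (1 - 1 / p) 0 =
      (1 - 1 / p) * piGen p q / (2 * (1 + 1 / q - 1 / p)) := by
  rw [deltaCoeff, hypCoeff_zero, Nat.cast_zero, add_zero,
    show 1 + 1 / q - 1 / p = 1 / q + (1 - 1 / p) by ring, ← div_div]
  ring

end Exponents

theorem stmt11_general (p q : ℝ) (hp : 1 < p) (hq : 1 < q)
    (r s : ℝ) (hr : r ∈ Set.Ioo (0:ℝ) 1) (hs : s ∈ Set.Ioo (0:ℝ) 1) :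
    (1 - 1/p) * piGen p q / (2 * (1 + 1/q - 1/p)) - 1 <
      DeltaGen p q (r * s) - DeltaGen p q r - DeltaGen p q s ∧
    DeltaGen p q (r * s) - DeltaGen p q r - DeltaGen p q s <
      1 - (1 - 1/p) * piGen p q / (2 * (1 + 1/q - 1/p)) := by
  have hq0 : 0 < q := by linarith
  have hα : 0 < 1 / q := by positivity
  have hβ := one_sub_one_div_pos hp
  have hπ : 0 < piGen p q / 2 := half_pos (piGen_pos hp hq0)
  have hpow : ∀ t ∈ Ioo (0 : ℝ) 1, t ^ p ∈ Ioo (0 : ℝ) 1 := fun t ht =>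
    ⟨rpow_pos_of_pos ht.1 p, rpow_lt_one ht.1.le ht.2 (by linarith)⟩
  have hbound := abs_tsum_mul_lt_tsum_sub (hasSum_deltaCoeff hα hβ).summable
    (fun n => (deltaCoeff_pos hα hβ n).le)
    (abs_powDiff_mul_sub_le (hpow r hr).1.le (hpow r hr).2.le (hpow s hs).1.le (hpow s hs).2.le)
    (by simp [powDiff]) (deltaCoeff_pos hα hβ 1)
    (abs_powDiff_mul_sub_one_lt (hpow r hr) (hpow s hs))
  rw [← neg_sub, ← abs_lt, deltaGen_mul_sub hp hq0 hr hs, abs_mul, abs_of_pos hπ]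
  calc _ < piGen p q / 2 *
          (∑' n, deltaCoeff (1 / q) (1 - 1 / p) n - deltaCoeff (1 / q) (1 - 1 / p) 0) :=
        mul_lt_mul_of_pos_left hbound hπ
    _ = _ := by
      rw [mul_sub, piGen_div_two_mul_tsum_deltaCoeff hp hq0, piGen_div_two_mul_deltaCoeff_zero]

theorem stmt11 (p q : ℝ) (hp : 1 < p) (hq : 1 < q)
    (h1 : 2 + 1/p + 1/p^2 ≤ 5/p + 1/q) (h1' : 5/p + 1/q < 3 + 1/p^2)
    (h2 : 0 < 20 - 42/p + 6/q + 21/p^2 - 2/q^2 - 20/(p*q) + 9/(p^2*q) - 3/p^3 - 1/(p^3*q))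
    (r s : ℝ) (hr : r ∈ Set.Ioo (0:ℝ) 1) (hs : s ∈ Set.Ioo (0:ℝ) 1) :
    (1 - 1/p) * piGen p q / (2 * (1 + 1/q - 1/p)) - 1 <
      DeltaGen p q (r * s) - DeltaGen p q r - DeltaGen p q s ∧
    DeltaGen p q (r * s) - DeltaGen p q r - DeltaGen p q s <
      1 - (1 - 1/p) * piGen p q / (2 * (1 + 1/q - 1/p)) :=
  stmt11_general p q hp hq r s hr hs
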